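/- Let d ∈ (0,1) and define the Henrick mapping g_d(ω) = ω·(d + d² − 3dω + ω²)/(d² + ω(1 − 2d)). If ω : (0,∞) → ℝ satisfies ω(Δx) − d = O(Δx²) as Δx → 0⁺, then g_d(ω(Δx)) − d = O(Δx⁶) as Δx → 0⁺. -/
import Mathlib


open Filter Asymptotics Topology

/-- The Henrick–Aslam–Powers mapping function of the WENO-M scheme. -/
noncomputable def henrick (d ω : ℝ) : ℝ :=
  ω * (d + d ^ 2 - 3 * d * ω + ω ^ 2) / (d ^ 2 + ω * (1 - 2 * d))

/-- If the WENO weights satisfy `ω(Δx) - d = O(Δx²)` as `Δx → 0⁺`, then the mapped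
weights satisfy `g_d(ω(Δx)) - d = O(Δx⁶)`. -/
theorem henrick_mapping_accuracy (d : ℝ) (hd : d ∈ Set.Ioo (0 : ℝ) 1) (ω : ℝ → ℝ)
    (hω : (fun Δx : ℝ => ω Δx - d) =O[𝓝[>] (0 : ℝ)] fun Δx => Δx ^ 2) :
    (fun Δx : ℝ => henrick d (ω Δx) - d) =O[𝓝[>] (0 : ℝ)] fun Δx => Δx ^ 6 := by
  obtain ⟨hd0, hd1⟩ := hd
  set l : Filter ℝ := 𝓝[>] (0 : ℝ)
  have hx2 : Tendsto (fun Δx : ℝ => Δx ^ 2) l (𝓝 0) := by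
    have : Tendsto (fun Δx : ℝ => Δx ^ 2) (𝓝 (0:ℝ)) (𝓝 ((0:ℝ) ^ 2)) :=
      (continuous_pow 2).tendsto 0
    simpa using this.mono_left nhdsWithin_le_nhds
  have hω0 : Tendsto (fun Δx => ω Δx - d) l (𝓝 0) := hω.trans_tendsto hx2
  have hωd : Tendsto ω l (𝓝 d) := by
    have := hω0.add_const d
    simpa using this
  set D : ℝ → ℝ := fun Δx => d ^ 2 + ω Δx * (1 - 2 * d) with hD
  have hDlim : Tendsto D l (𝓝 (d * (1 - d))) := by
    have : Tendsto D l (𝓝 (d ^ 2 + d * (1 - 2 * d))) :=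
      tendsto_const_nhds.add (hωd.mul tendsto_const_nhds)
    convert this using 2
    ring
  have hne : d * (1 - d) ≠ 0 := ne_of_gt (mul_pos hd0 (by linarith))
  have hDne : ∀ᶠ Δx in l, D Δx ≠ 0 := hDlim.eventually_ne hne
  have hDinv : Tendsto (fun Δx => (D Δx)⁻¹) l (𝓝 (d * (1 - d))⁻¹) := hDlim.inv₀ hne
  have hDinvO : (fun Δx => (D Δx)⁻¹) =O[l] (fun _ => (1 : ℝ)) :=
    hDinv.isBigO_one ℝ
  have hcube : (fun Δx => (ω Δx - d) ^ 3) =O[l] (fun Δx => Δx ^ 6) := by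
    have := hω.pow 3
    simpa [← pow_mul] using this
  have hmul : (fun Δx => (ω Δx - d) ^ 3 * (D Δx)⁻¹) =O[l] (fun Δx => Δx ^ 6) := by
    simpa using hcube.mul hDinvO
  refine hmul.congr' ?_ (Eventually.of_forall fun _ => rfl)
  filter_upwards [hDne] with Δx hne'
  show (ω Δx - d) ^ 3 * (D Δx)⁻¹ = henrick d (ω Δx) - d
  rw [henrick, eq_sub_iff_add_eq, eq_div_iff hne']
  field_simp
  ring
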